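/- Let f : ℝ → ℝ be a smooth, compactly supported, even function, and let f̂(y) = ∫_ℝ f(x) e^{−ixy} dx be its Fourier transform. Then for every natural number k, lim_{y→+∞} y^{−k} ∫_0^∞ x^k f̂(y − x) dx = 2π f(0). -/

import Mathlib

open MeasureTheory Filter
open scoped FourierTransform Real

/-- A smooth compactly supported function is (represented by) a Schwartz map. -/
lemma aux_toSchwartz {g : ℝ → ℂ} (hg : ContDiff ℝ (⊤ : ℕ∞) g) (h : HasCompactSupport g) :
    ∃ φ : SchwartzMap ℝ ℂ, ⇑φ = g := by
  refine ⟨⟨g, hg.of_le (by simp), fun k n => ?_⟩, rfl⟩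
  have hcs : HasCompactSupport (fun x : ℝ => ‖x‖ ^ k * ‖iteratedFDeriv ℝ n g x‖) :=
    ((h.iteratedFDeriv n).norm).mul_left
  have hcont : Continuous (fun x : ℝ => ‖x‖ ^ k * ‖iteratedFDeriv ℝ n g x‖) :=
    (continuous_norm.pow k).mul (hg.continuous_iteratedFDeriv (by exact_mod_cast le_top)).norm
  obtain ⟨C, hC⟩ := hcs.exists_bound_of_continuous hcont
  refine ⟨C, fun x => ?_⟩
  have h := hC x
  rw [Real.norm_eq_abs] at h
  exact (le_abs_self _).trans h

/-- Lemma 3.3: for a smooth, compactly supported, even `f : ℝ → ℝ` with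
Fourier transform `f̂(y) = ∫ f(x) e^{-ixy} dx`, and every `k : ℕ`,
`lim_{y → ∞} y^{-k} ∫_0^∞ x^k f̂(y - x) dx = 2π f(0)`. -/
theorem stmt1 (f : ℝ → ℝ) (hf : ContDiff ℝ (⊤ : ℕ∞) f) (hsupp : HasCompactSupport f)
    (heven : ∀ x, f (-x) = f x)
    (fhat : ℝ → ℂ)
    (hfhat : ∀ y : ℝ, fhat y = ∫ x : ℝ, (f x : ℂ) * Complex.exp (-Complex.I * x * y))
    (k : ℕ) :
    Tendsto (fun y : ℝ => (y ^ k)⁻¹ • ∫ x in Set.Ioi (0 : ℝ), x ^ k • fhat (y - x))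
      atTop (nhds ((2 * Real.pi * f 0 : ℝ) : ℂ)) := by
  have twopi_pos : (0:ℝ) < 2 * Real.pi := by positivity
  have twopi_ge : (1:ℝ) ≤ 2 * Real.pi := by nlinarith [Real.pi_gt_three]
  set φ : ℝ → ℂ := fun x => (f x : ℂ) with hφdef
  have hφc : ContDiff ℝ (⊤ : ℕ∞) φ := Complex.ofRealCLM.contDiff.comp hf
  have hφs : HasCompactSupport φ := hsupp.comp_left (g := fun r : ℝ => (r : ℂ)) (by simp)
  obtain ⟨Φ, hΦ⟩ := aux_toSchwartz hφc hφs
  -- rewrite fhat in terms of the mathlib Fourier transform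
  have hfhat2 : ∀ y : ℝ, fhat y = 𝓕 φ (y / (2 * Real.pi)) := by
    intro y
    rw [hfhat, Real.fourier_real_eq_integral_exp_smul]
    refine integral_congr_ae (Filter.Eventually.of_forall fun x => ?_)
    simp only [smul_eq_mul]
    rw [mul_comm]
    congr 2
    have h : -2 * Real.pi * x * (y / (2 * Real.pi)) = -(x * y) := by
      field_simp
    rw [h]; push_cast; ring
  -- Schwartz Fourier transform
  set Ψ : SchwartzMap ℝ ℂ := SchwartzMap.fourierTransformCLM ℂ Φ with hΨdef
  have hΨ : ⇑Ψ = 𝓕 φ := by rw [hΨdef, SchwartzMap.fourierTransformCLM_apply, SchwartzMap.fourier_coe, hΦ]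
  -- decay bound for 𝓕 φ
  obtain ⟨C, hC0, hC⟩ : ∃ C, 0 ≤ C ∧ ∀ x : ℝ, (1 + |x|) ^ (k + 2) * ‖𝓕 φ x‖ ≤ C := by
    refine ⟨2 ^ (k + 2) * (Finset.Iic ((k+2 : ℕ), (0:ℕ))).sup
      (fun m => SchwartzMap.seminorm ℝ m.1 m.2) Ψ, by positivity, fun x => ?_⟩
    have h := SchwartzMap.one_add_le_sup_seminorm_apply (𝕜 := ℝ) (m := ((k+2 : ℕ), (0:ℕ)))
      le_rfl le_rfl Ψ x
    simpa [hΨ, Real.norm_eq_abs, norm_iteratedFDeriv_zero] using h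
  set C' : ℝ := (2 * Real.pi) ^ (k + 2) * C with hC'def
  have hC'0 : 0 ≤ C' := by positivity
  -- key decay: (1+|t|)^k * ‖fhat t‖ ≤ C' * (1+t^2)⁻¹
  have hkey : ∀ t : ℝ, (1 + |t|) ^ k * ‖fhat t‖ ≤ C' * (1 + t ^ 2)⁻¹ := by
    intro t
    have hb : (1 + |t|) ^ (k + 2) * ‖fhat t‖ ≤ C' := by
      rw [hfhat2 t]
      have h1 : (1 + |t|) ≤ (2 * Real.pi) * (1 + |t / (2 * Real.pi)|) := by
        rw [abs_div, abs_of_pos twopi_pos, mul_add, mul_one,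
          mul_div_cancel₀ _ twopi_pos.ne']
        nlinarith [abs_nonneg t]
      calc (1 + |t|) ^ (k + 2) * ‖𝓕 φ (t / (2 * Real.pi))‖
          ≤ ((2 * Real.pi) * (1 + |t / (2 * Real.pi)|)) ^ (k + 2)
              * ‖𝓕 φ (t / (2 * Real.pi))‖ := by
            gcongr
        _ = (2 * Real.pi) ^ (k + 2) *
              ((1 + |t / (2 * Real.pi)|) ^ (k + 2) * ‖𝓕 φ (t / (2 * Real.pi))‖) := by
            rw [mul_pow]; ring
        _ ≤ (2 * Real.pi) ^ (k + 2) * C :=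
            mul_le_mul_of_nonneg_left (hC _) (by positivity)
        _ = C' := rfl
    have h1 : (0:ℝ) < 1 + t ^ 2 := by positivity
    rw [← div_eq_mul_inv, le_div_iff₀ h1]
    calc (1 + |t|) ^ k * ‖fhat t‖ * (1 + t ^ 2)
        ≤ (1 + |t|) ^ k * ‖fhat t‖ * (1 + |t|) ^ 2 := by
          gcongr
          nlinarith [sq_abs t, abs_nonneg t]
      _ = (1 + |t|) ^ (k + 2) * ‖fhat t‖ := by ring
      _ ≤ C' := hb
  -- continuity and integrability of fhat
  have hfhat_fun : fhat = fun y => 𝓕 φ (y / (2 * Real.pi)) := funext hfhat2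
  have hfhat_cont : Continuous fhat := by
    rw [hfhat_fun]
    exact (hΨ ▸ Ψ.continuous).comp (continuous_id.div_const _)
  have hBint : Integrable (fun t : ℝ => C' * (1 + t ^ 2)⁻¹) :=
    integrable_inv_one_add_sq.const_mul C'
  have hfhat_norm_le : ∀ t : ℝ, ‖fhat t‖ ≤ C' * (1 + t ^ 2)⁻¹ := by
    intro t
    refine le_trans ?_ (hkey t)
    exact le_mul_of_one_le_left (norm_nonneg _)
      (one_le_pow₀ (by simpa using abs_nonneg t))
  have hfhat_int : Integrable fhat :=
    hBint.mono' hfhat_cont.aestronglyMeasurable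
      (Filter.Eventually.of_forall fun t => hfhat_norm_le t)
  -- value of the full integral of fhat
  have hval : (∫ t : ℝ, fhat t) = ((2 * Real.pi * f 0 : ℝ) : ℂ) := by
    have h1 : (∫ t : ℝ, fhat t) = |2 * Real.pi| • ∫ u : ℝ, 𝓕 φ u := by
      rw [hfhat_fun]
      exact MeasureTheory.Measure.integral_comp_div (𝓕 φ) (2 * Real.pi)
    have hφint : Integrable φ := hΦ ▸ Φ.integrable
    have hFint : Integrable (𝓕 φ) := hΨ ▸ Ψ.integrable
    have hinv := (hφc.continuous).fourierInv_fourier_eq hφint hFint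
    have h2 : (∫ u : ℝ, 𝓕 φ u) = φ 0 := by
      have h3 : (∫ u : ℝ, 𝓕 φ u) = 𝓕⁻ (𝓕 φ) 0 := by
        rw [Real.fourierInv_eq]
        simp
      rw [h3, hinv]
    rw [h1, h2, abs_of_pos twopi_pos, hφdef]
    rw [Complex.real_smul]
    push_cast
    ring
  -- the family of functions for dominated convergence
  set F : ℝ → ℝ → ℂ := fun y t =>
    Set.indicator (Set.Iio y) (fun t => (((y - t) / y) ^ k : ℝ) • fhat t) t with hFdef
  -- rewriting the original expression
  have hEq : ∀ y : ℝ, 0 < y →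
      ((y ^ k)⁻¹ • ∫ x in Set.Ioi (0 : ℝ), x ^ k • fhat (y - x)) = ∫ t : ℝ, F y t := by
    intro y hy
    have step1 : (∫ t : ℝ, F y t) =
        ∫ t : ℝ, Set.indicator (Set.Ioi (0:ℝ))
          (fun x => ((x / y) ^ k : ℝ) • fhat (y - x)) (y - t) := by
      refine integral_congr_ae (Filter.Eventually.of_forall fun t => ?_)
      simp only [hFdef, Set.indicator_apply, Set.mem_Iio, Set.mem_Ioi, sub_pos,
        sub_sub_cancel]
    have step2 : (∫ t : ℝ, Set.indicator (Set.Ioi (0:ℝ))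
          (fun x => ((x / y) ^ k : ℝ) • fhat (y - x)) (y - t)) =
        ∫ x : ℝ, Set.indicator (Set.Ioi (0:ℝ))
          (fun x => ((x / y) ^ k : ℝ) • fhat (y - x)) x :=
      integral_sub_left_eq_self _ volume y
    have step3 : (∫ x : ℝ, Set.indicator (Set.Ioi (0:ℝ))
          (fun x => ((x / y) ^ k : ℝ) • fhat (y - x)) x) =
        ∫ x in Set.Ioi (0:ℝ), ((x / y) ^ k : ℝ) • fhat (y - x) :=
      integral_indicator measurableSet_Ioi
    have step4 : (∫ x in Set.Ioi (0:ℝ), ((x / y) ^ k : ℝ) • fhat (y - x)) =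
        ∫ x in Set.Ioi (0:ℝ), (y ^ k)⁻¹ • (x ^ k • fhat (y - x)) := by
      refine integral_congr_ae (Filter.Eventually.of_forall fun x => ?_)
      show (x / y) ^ k • fhat (y - x) = (y ^ k)⁻¹ • x ^ k • fhat (y - x)
      rw [smul_smul, div_pow, div_eq_mul_inv, mul_comm]
    rw [step1, step2, step3, step4, integral_smul]
  -- dominated convergence
  have hmain : Tendsto (fun y => ∫ t : ℝ, F y t) atTop (nhds (∫ t : ℝ, fhat t)) := by
    refine tendsto_integral_filter_of_dominated_convergence
      (fun t : ℝ => C' * (1 + t ^ 2)⁻¹) ?_ ?_ hBint ?_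
    · refine Filter.Eventually.of_forall fun y => ?_
      exact ((((continuous_const.sub continuous_id).div_const y).pow k).smul
        hfhat_cont).aestronglyMeasurable.indicator measurableSet_Iio
    · filter_upwards [eventually_ge_atTop (1:ℝ)] with y hy
      refine Filter.Eventually.of_forall fun t => ?_
      have h0y : (0:ℝ) < y := lt_of_lt_of_le one_pos hy
      by_cases ht : t ∈ Set.Iio y
      · simp only [hFdef]
        rw [Set.indicator_of_mem ht, norm_smul, Real.norm_eq_abs, abs_pow]
        have hty : t < y := ht
        have habs : |(y - t) / y| ≤ 1 + |t| := by
          rw [abs_of_nonneg (div_nonneg (sub_nonneg.2 hty.le) h0y.le),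
            div_le_iff₀ h0y]
          nlinarith [neg_abs_le t, abs_nonneg t]
        calc |(y - t) / y| ^ k * ‖fhat t‖
            ≤ (1 + |t|) ^ k * ‖fhat t‖ := by
              gcongr
          _ ≤ C' * (1 + t ^ 2)⁻¹ := hkey t
      · simp only [hFdef]
        rw [Set.indicator_of_notMem ht]
        simp only [norm_zero]
        positivity
    · refine Filter.Eventually.of_forall fun t => ?_
      have h1 : Tendsto (fun y : ℝ => ((y - t) / y) ^ k) atTop (nhds 1) := by
        have h2 : Tendsto (fun y : ℝ => 1 - t / y) atTop (nhds 1) := by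
          have h3 : Tendsto (fun y : ℝ => t / y) atTop (nhds 0) := by
            simpa [div_eq_mul_inv] using tendsto_inv_atTop_zero.const_mul t
          simpa using tendsto_const_nhds.sub h3
        have h4 : Tendsto (fun y : ℝ => (y - t) / y) atTop (nhds 1) := by
          refine h2.congr' ?_
          filter_upwards [eventually_gt_atTop (0:ℝ)] with y hy
          field_simp
        simpa using h4.pow k
      have h2 : Tendsto (fun y : ℝ => (((y - t) / y) ^ k : ℝ) • fhat t)
          atTop (nhds (fhat t)) := by
        simpa using h1.smul_const (fhat t)
      refine h2.congr' ?_
      filter_upwards [eventually_gt_atTop t] with y hy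
      simp only [hFdef]
      rw [Set.indicator_of_mem (show t ∈ Set.Iio y from hy)]
  have hfinal : Tendsto (fun y : ℝ => (y ^ k)⁻¹ • ∫ x in Set.Ioi (0 : ℝ),
      x ^ k • fhat (y - x)) atTop (nhds (∫ t : ℝ, fhat t)) := by
    refine hmain.congr' ?_
    filter_upwards [eventually_gt_atTop (0:ℝ)] with y hy
    exact (hEq y hy).symm
  rwa [hval] at hfinal
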